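/- arXiv:2410.24206 — 3 statements merged into one kernel-verified Lean document; each statement's English description precedes it below -/
import Mathlib

section
/- Let A : ℝ → Sym(ℝ^d) be right-differentiable at t with A(s) ⪰ 0 for all s, and let Σ : ℝ → Sym(ℝ^d) be right-continuous at t with 0 ⪯ Σ(s) ⊥ A(s) ⪰ 0 for all s. Then ⟨Σ(t), (d/dt⁺)A(t)⟩ = 0, and moreover (d/dt⁺)A(t) is PSD on ker A(t), so Σ(t) and the right derivative of A satisfy the complementarity relation 0 ⪯ Σ(t) ⊥ (d/dt⁺)A(t) ⪰_{ker A(t)} 0. -/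
set_option maxHeartbeats 1000000

open Matrix Filter

private lemma psd_trace_nonneg {d : ℕ} {M : Matrix (Fin d) (Fin d) ℝ}
    (hM : M.PosSemidef) : 0 ≤ M.trace := by
  rw [Matrix.trace]
  apply Finset.sum_nonneg
  intro i _
  have := hM.dotProduct_mulVec_nonneg (Pi.single i 1)
  simpa [Matrix.mulVec, dotProduct, Pi.single_apply, Matrix.diag] using this

private lemma trace_mul_nonneg' {d : ℕ} {X Y : Matrix (Fin d) (Fin d) ℝ}
    (hX : X.PosSemidef) (hY : Y.PosSemidef) : 0 ≤ (Xᵀ * Y).trace := by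
  obtain ⟨B, hB⟩ : ∃ B : Matrix (Fin d) (Fin d) ℝ, Y = Bᴴ * B := by
    open scoped MatrixOrder in
    simpa [Matrix.star_eq_conjTranspose] using CStarAlgebra.nonneg_iff_eq_star_mul_self.mp hY.nonneg
  have hXt : Xᵀ = X := by
    have := hX.1
    rwa [Matrix.IsHermitian, Matrix.conjTranspose_eq_transpose_of_trivial] at this
  have hpsd : ((B * X) * Bᴴ).PosSemidef := by
    have := hX.mul_mul_conjTranspose_same B
    exact this
  have htr : (Xᵀ * Y).trace = ((B * X) * Bᴴ).trace := by
    rw [hXt, hB, ← Matrix.trace_mul_cycle, Matrix.mul_assoc]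
  rw [htr]
  exact psd_trace_nonneg hpsd

/-- Differentiating the complementarity relation: if `A : ℝ → Sym(ℝ^d)` is
right-differentiable at `t` with right derivative `A'`, `Σ : ℝ → Sym(ℝ^d)` is
right-continuous at `t`, and `0 ⪯ Σ(s) ⊥ A(s) ⪰ 0` holds for all `s` (in the Frobenius
inner product `⟨X, Y⟩ = tr(Xᵀ Y)`), then `⟨Σ(t), A'⟩ = 0` and `A'` is positive
semidefinite on `ker A(t)`, i.e. `0 ⪯ Σ(t) ⊥ A' ⪰_{ker A(t)} 0`. -/
theorem stmt7 {d : ℕ} (A Sg : ℝ → Matrix (Fin d) (Fin d) ℝ) (t : ℝ)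
    (A' : Matrix (Fin d) (Fin d) ℝ)
    (hAsymm : ∀ s, (A s).IsSymm) (hSgsymm : ∀ s, (Sg s).IsSymm)
    (hcomp : ∀ s, (Sg s).PosSemidef ∧ (A s).PosSemidef ∧ ((Sg s)ᵀ * A s).trace = 0)
    (hderiv : Tendsto (fun ε : ℝ => ε⁻¹ • (A (t + ε) - A t))
      (nhdsWithin 0 (Set.Ioi 0)) (nhds A'))
    (hcont : Tendsto Sg (nhdsWithin t (Set.Ici t)) (nhds (Sg t))) :
    ((Sg t)ᵀ * A').trace = 0 ∧
    ∀ u : Fin d → ℝ, (A t).mulVec u = 0 → 0 ≤ u ⬝ᵥ A'.mulVec u := by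
  have hφ : (nhdsWithin (0:ℝ) (Set.Ioi 0)).NeBot := nhdsGT_neBot 0
  -- the map ε ↦ t + ε sends nhdsWithin 0 (Ioi 0) into nhdsWithin t (Ici t)
  have hmap : Tendsto (fun ε : ℝ => t + ε) (nhdsWithin 0 (Set.Ioi 0))
      (nhdsWithin t (Set.Ici t)) := by
    apply tendsto_nhdsWithin_of_tendsto_nhds_of_eventually_within
    · have : Tendsto (fun ε : ℝ => t + ε) (nhds 0) (nhds t) := by
        simpa using (tendsto_const_nhds (x := t)).add (tendsto_id (x := nhds (0:ℝ)))
      exact this.mono_left nhdsWithin_le_nhds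
    · filter_upwards [self_mem_nhdsWithin] with ε hε
      have : (0:ℝ) < ε := hε
      simp only [Set.mem_Ici]
      linarith
  have hSgt : Tendsto (fun ε : ℝ => Sg (t + ε)) (nhdsWithin 0 (Set.Ioi 0))
      (nhds (Sg t)) := hcont.comp hmap
  -- Part 1
  have htrace : Continuous (Matrix.trace : Matrix (Fin d) (Fin d) ℝ → ℝ) :=
    continuous_id.matrix_trace
  have h1 : Tendsto (fun ε : ℝ => ((Sg t)ᵀ * (ε⁻¹ • (A (t + ε) - A t))).trace)
      (nhdsWithin 0 (Set.Ioi 0)) (nhds (((Sg t)ᵀ * A').trace)) := by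
    have hmul1 : Tendsto (fun ε : ℝ => (Sg t)ᵀ * (ε⁻¹ • (A (t + ε) - A t)))
        (nhdsWithin 0 (Set.Ioi 0)) (nhds ((Sg t)ᵀ * A')) := hderiv.const_mul _
    exact (htrace.tendsto _).comp hmul1
  have h2 : Tendsto (fun ε : ℝ => ((Sg (t + ε))ᵀ * (ε⁻¹ • (A (t + ε) - A t))).trace)
      (nhdsWithin 0 (Set.Ioi 0)) (nhds (((Sg t)ᵀ * A').trace)) := by
    have hTt : Tendsto (fun ε : ℝ => (Sg (t + ε))ᵀ) (nhdsWithin 0 (Set.Ioi 0))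
        (nhds ((Sg t)ᵀ)) := (continuous_id.matrix_transpose.tendsto _).comp hSgt
    have hmul2 : Tendsto (fun ε : ℝ => (Sg (t + ε))ᵀ * (ε⁻¹ • (A (t + ε) - A t)))
        (nhdsWithin 0 (Set.Ioi 0)) (nhds ((Sg t)ᵀ * A')) := hTt.mul hderiv
    exact (htrace.tendsto _).comp hmul2
  have hge : 0 ≤ ((Sg t)ᵀ * A').trace := by
    apply ge_of_tendsto h1
    filter_upwards [self_mem_nhdsWithin] with ε hε
    have hε' : (0:ℝ) < ε := hε
    rw [Matrix.mul_smul, Matrix.trace_smul, Matrix.mul_sub, Matrix.trace_sub,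
      (hcomp t).2.2, sub_zero, smul_eq_mul]
    exact mul_nonneg (le_of_lt (inv_pos.mpr hε')) (trace_mul_nonneg' (hcomp t).1 (hcomp (t + ε)).2.1)
  have hle : ((Sg t)ᵀ * A').trace ≤ 0 := by
    apply le_of_tendsto h2
    filter_upwards [self_mem_nhdsWithin] with ε hε
    have hε' : (0:ℝ) < ε := hε
    rw [Matrix.mul_smul, Matrix.trace_smul, Matrix.mul_sub, Matrix.trace_sub,
      (hcomp (t + ε)).2.2, zero_sub, smul_eq_mul]
    have : 0 ≤ ((Sg (t + ε))ᵀ * A t).trace :=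
      trace_mul_nonneg' (hcomp (t + ε)).1 (hcomp t).2.1
    have := mul_nonneg (le_of_lt (inv_pos.mpr hε')) this
    linarith
  refine ⟨le_antisymm hle hge, ?_⟩
  intro u hu
  have hmv : Tendsto (fun ε : ℝ => (ε⁻¹ • (A (t + ε) - A t)).mulVec u)
      (nhdsWithin 0 (Set.Ioi 0)) (nhds (A'.mulVec u)) :=
    (((continuous_id.matrix_mulVec continuous_const).tendsto _).comp hderiv : _)
  have htend : Tendsto (fun ε : ℝ => u ⬝ᵥ (ε⁻¹ • (A (t + ε) - A t)).mulVec u)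
      (nhdsWithin 0 (Set.Ioi 0)) (nhds (u ⬝ᵥ A'.mulVec u)) :=
    ((continuous_const.dotProduct continuous_id).tendsto _).comp hmv
  apply ge_of_tendsto htend
  filter_upwards [self_mem_nhdsWithin] with ε hε
  have hε' : (0:ℝ) < ε := hε
  have hAeps : 0 ≤ u ⬝ᵥ (A (t + ε)).mulVec u := by
    have := (hcomp (t + ε)).2.1.dotProduct_mulVec_nonneg u
    simpa using this
  rw [Matrix.smul_mulVec, Matrix.sub_mulVec, hu, sub_zero, dotProduct_smul,
    smul_eq_mul]
  exact mul_nonneg (le_of_lt (inv_pos.mpr hε')) hAeps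
end

section
/- Suppose a differentiable curve w(t) in ℝ^d satisfies dw/dt = proj_{T(w)}(−η ∇L(w)) for almost all t, where η > 0, L is continuously differentiable, and T(w) is a closed convex cone for each w. Then for almost all t, (d/dt) L(w(t)) = −η ‖proj_{T(w(t))}(−∇L(w(t)))‖² ≤ 0, so the loss L(w(t)) is monotonically non-increasing. -/
open MeasureTheory Filter
open scoped RealInnerProductSpace

/-- `IsProjOn C v p` means `p` is a (metric) projection of `v` onto the set `C`. -/
def IsProjOn {E : Type*} [NormedAddCommGroup E] (C : Set E) (v p : E) : Prop :=
  p ∈ C ∧ ∀ z ∈ C, ‖v - p‖ ≤ ‖v - z‖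

section aux

variable {E : Type*} [NormedAddCommGroup E] [InnerProductSpace ℝ E]

/-- Variational inequality for projections onto convex sets. -/
lemma isProjOn_inner_le {C : Set E} (hC : Convex ℝ C) {v p : E}
    (h : IsProjOn C v p) : ∀ z ∈ C, ⟪v - p, z - p⟫ ≤ 0 := by
  have : Nonempty C := ⟨⟨p, h.1⟩⟩
  rw [← norm_eq_iInf_iff_real_inner_le_zero hC h.1]
  refine le_antisymm (le_ciInf fun z => h.2 z z.2) ?_
  exact ciInf_le ⟨0, fun _ ⟨_, hz⟩ => hz ▸ norm_nonneg _⟩ (⟨p, h.1⟩ : C)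

/-- Uniqueness of projections onto convex sets. -/
lemma isProjOn_unique {C : Set E} (hC : Convex ℝ C) {v p p' : E}
    (h : IsProjOn C v p) (h' : IsProjOn C v p') : p = p' := by
  have h1 := isProjOn_inner_le hC h p' h'.1
  have h2 := isProjOn_inner_le hC h' p h.1
  have key : ⟪p - p', p - p'⟫ ≤ 0 := by
    have e : ⟪p - p', p - p'⟫ = ⟪v - p', p - p'⟫ + ⟪v - p, p' - p⟫ := by
      rw [show p' - p = -(p - p') by abel, inner_neg_right, ← sub_eq_add_neg,
        ← inner_sub_left]
      congr 1; abel
    rw [e]; exact add_nonpos h2 h1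
  have hz : ⟪p - p', p - p'⟫ = (0:ℝ) := le_antisymm key real_inner_self_nonneg
  exact sub_eq_zero.mp ((inner_self_eq_zero (𝕜 := ℝ)).mp hz)

/-- Scaling property of projections onto cones. -/
lemma isProjOn_smul {C : Set E} (hcone : ∀ c : ℝ, 0 ≤ c → ∀ y ∈ C, c • y ∈ C)
    {v p : E} (h : IsProjOn C v p) {c : ℝ} (hc : 0 < c) : IsProjOn C (c • v) (c • p) := by
  refine ⟨hcone c hc.le p h.1, fun z hz => ?_⟩
  have hz' : c⁻¹ • z ∈ C := hcone c⁻¹ (by positivity) z hz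
  have := h.2 _ hz'
  calc ‖c • v - c • p‖ = c * ‖v - p‖ := by
        rw [← smul_sub, norm_smul, Real.norm_eq_abs, abs_of_pos hc]
    _ ≤ c * ‖v - c⁻¹ • z‖ := by nlinarith
    _ = ‖c • v - z‖ := by
        have hcz : c • (v - c⁻¹ • z) = c • v - z := by
          rw [smul_sub, smul_inv_smul₀ hc.ne']
        rw [← hcz, norm_smul, Real.norm_eq_abs, abs_of_pos hc]

/-- Moreau-type orthogonality: `⟪v, p⟫ = ‖p‖²` for the projection `p` of `v` onto a cone. -/
lemma isProjOn_inner_self {C : Set E} (hC : Convex ℝ C)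
    (hcone : ∀ c : ℝ, 0 ≤ c → ∀ y ∈ C, c • y ∈ C) (hne : C.Nonempty)
    {v p : E} (h : IsProjOn C v p) : ⟪v, p⟫ = ‖p‖ ^ 2 := by
  obtain ⟨y, hy⟩ := hne
  have h0 : (0 : E) ∈ C := by simpa using hcone 0 le_rfl y hy
  have h2 : (2 : ℝ) • p ∈ C := hcone 2 (by norm_num) p h.1
  have key := isProjOn_inner_le hC h
  have hA := key _ h2
  have hB := key _ h0
  have e2 : ((2:ℝ) • p) - p = p := by rw [two_smul]; abel
  have e0 : (0 : E) - p = -p := by abel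
  rw [e2] at hA
  rw [e0, inner_neg_right] at hB
  have horth : ⟪v - p, p⟫ = 0 := le_antisymm hA (by linarith)
  have := real_inner_self_eq_norm_sq p
  rw [inner_sub_left] at horth
  linarith

lemma isProjOn_norm_le {C : Set E} (hC : Convex ℝ C)
    (hcone : ∀ c : ℝ, 0 ≤ c → ∀ y ∈ C, c • y ∈ C) (hne : C.Nonempty)
    {v p : E} (h : IsProjOn C v p) : ‖p‖ ≤ ‖v‖ := by
  have h1 : ⟪v, p⟫ = ‖p‖ ^ 2 := isProjOn_inner_self hC hcone hne h
  have h2 : ⟪v, p⟫ ≤ ‖v‖ * ‖p‖ := real_inner_le_norm v p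
  rcases eq_or_lt_of_le (norm_nonneg p) with hp | hp
  · rw [← hp]; exact norm_nonneg v
  · nlinarith

end aux

/-- If a differentiable curve `w` satisfies `dw/dt = proj_{T(w)}(−η ∇L(w))` for almost
all `t`, where `η > 0`, `L` is `C¹`, and each `T(w)` is a nonempty closed convex cone,
then for almost all `t`, `(d/dt) L(w(t)) = −η ‖proj_{T(w(t))}(−∇L(w(t)))‖² ≤ 0`, and the
loss `L(w(t))` is monotonically non-increasing. -/
theorem stmt11 {d : ℕ} (L : EuclideanSpace ℝ (Fin d) → ℝ) (hL : ContDiff ℝ 1 L)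
    (η : ℝ) (hη : 0 < η)
    (T : EuclideanSpace ℝ (Fin d) → Set (EuclideanSpace ℝ (Fin d)))
    (hTcl : ∀ x, IsClosed (T x)) (hTconv : ∀ x, Convex ℝ (T x))
    (hTne : ∀ x, (T x).Nonempty)
    (hTcone : ∀ x, ∀ c : ℝ, 0 ≤ c → ∀ y ∈ T x, c • y ∈ T x)
    (w : ℝ → EuclideanSpace ℝ (Fin d)) (hw : Differentiable ℝ w)
    (hflow : ∀ᵐ t ∂volume, ∃ p, IsProjOn (T (w t)) (-(η • gradient L (w t))) p ∧
      HasDerivAt w p t) :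
    (∀ᵐ t ∂volume, ∀ q, IsProjOn (T (w t)) (-gradient L (w t)) q →
        deriv (fun s => L (w s)) t = -(η * ‖q‖ ^ 2) ∧ deriv (fun s => L (w s)) t ≤ 0) ∧
    Antitone fun t => L (w t) := by
  have hLd : Differentiable ℝ L := hL.differentiable one_ne_zero
  set g : ℝ → EuclideanSpace ℝ (Fin d) := fun t => gradient L (w t) with hg
  -- derivative formula at points where the flow equation holds
  have hderiv : ∀ t p, HasDerivAt w p t →
      HasDerivAt (fun s => L (w s)) (⟪g t, p⟫) t := by
    intro t p hp
    have hG : HasGradientAt L (gradient L (w t)) (w t) :=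
      (hLd (w t)).hasGradientAt
    have := hG.hasFDerivAt.comp_hasDerivAt t hp
    rw [InnerProductSpace.toDual_apply_apply] at this
    exact this
  -- the key pointwise computation
  have hkey : ∀ t p, IsProjOn (T (w t)) (-(η • g t)) p → HasDerivAt w p t →
      ∀ q, IsProjOn (T (w t)) (-(g t)) q →
        deriv (fun s => L (w s)) t = -(η * ‖q‖ ^ 2) := by
    intro t p hp hwp q hq
    have hsmul : IsProjOn (T (w t)) (-(η • g t)) (η • q) := by
      have := isProjOn_smul (hTcone (w t)) hq hη
      simpa [smul_neg] using this
    have hpq : p = η • q := isProjOn_unique (hTconv (w t)) hp hsmul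
    have hmor : ⟪-(g t), q⟫ = ‖q‖ ^ 2 :=
      isProjOn_inner_self (hTconv (w t)) (hTcone (w t)) (hTne (w t)) hq
    have hd := (hderiv t p hwp).deriv
    rw [hd, hpq, real_inner_smul_right]
    rw [inner_neg_left] at hmor
    linear_combination (-η) * hmor
  -- a.e. statement
  have hae : ∀ᵐ t ∂volume, ∀ q, IsProjOn (T (w t)) (-(g t)) q →
      deriv (fun s => L (w s)) t = -(η * ‖q‖ ^ 2) ∧ deriv (fun s => L (w s)) t ≤ 0 := by
    filter_upwards [hflow] with t ⟨p, hp, hwp⟩ q hq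
    have h1 := hkey t p hp hwp q hq
    refine ⟨h1, ?_⟩
    rw [h1]
    have : 0 ≤ η * ‖q‖ ^ 2 := by positivity
    linarith
  refine ⟨hae, ?_⟩
  -- Antitone via FTC
  have hfd : ∀ t, HasDerivAt (fun s => L (w s)) (⟪g t, deriv w t⟫) t :=
    fun t => hderiv t (deriv w t) (hw t).hasDerivAt
  have hgcont : Continuous g := by
    have h1 : Continuous fun x => fderiv ℝ L x := hL.continuous_fderiv one_ne_zero
    have h2 : Continuous fun x => gradient L x :=
      (InnerProductSpace.toDual ℝ (EuclideanSpace ℝ (Fin d))).symm.continuous.comp h1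
    exact h2.comp hw.continuous
  -- a.e. bound and nonpositivity on deriv
  have hbound : ∀ᵐ t ∂volume, |deriv (fun s => L (w s)) t| ≤ η * ‖g t‖ ^ 2 ∧
      deriv (fun s => L (w s)) t ≤ 0 := by
    filter_upwards [hflow] with t ⟨p, hp, hwp⟩
    set q : EuclideanSpace ℝ (Fin d) := η⁻¹ • p with hqdef
    have hq : IsProjOn (T (w t)) (-(g t)) q := by
      have := isProjOn_smul (hTcone (w t)) hp (inv_pos.mpr hη)
      simpa [smul_neg, smul_smul, inv_mul_cancel₀ hη.ne'] using this
    have h1 := hkey t p hp hwp q hq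
    have hqle : ‖q‖ ≤ ‖g t‖ := by
      have := isProjOn_norm_le (hTconv (w t)) (hTcone (w t)) (hTne (w t)) hq
      simpa using this
    constructor
    · rw [h1, abs_neg, abs_of_nonneg (by positivity)]
      have h2 := mul_self_le_mul_self (norm_nonneg q) hqle
      nlinarith
    · rw [h1]
      have : 0 ≤ η * ‖q‖ ^ 2 := by positivity
      linarith
  intro a b hab
  simp only
  have hint : IntervalIntegrable (deriv fun s => L (w s)) volume a b := by
    apply IntervalIntegrable.mono_fun' (g := fun t => η * ‖g t‖ ^ 2)
    · exact (continuous_const.mul ((hgcont.norm).pow 2)).intervalIntegrable a b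
    · exact (aestronglyMeasurable_deriv _ _).restrict
    · exact ae_restrict_of_ae <| hbound.mono fun t h => by
        simpa [Real.norm_eq_abs] using h.1
  have hFTC : ∫ t in a..b, deriv (fun s => L (w s)) t = L (w b) - L (w a) :=
    intervalIntegral.integral_eq_sub_of_hasDerivAt
      (fun t _ => (hfd t).deriv ▸ hfd t) hint
  have hnonpos : ∫ t in a..b, deriv (fun s => L (w s)) t ≤ 0 := by
    have : 0 ≤ ∫ t in a..b, -(deriv (fun s => L (w s)) t) := by
      apply intervalIntegral.integral_nonneg_of_ae hab
      exact hbound.mono fun t h => by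
        simp only [Pi.zero_apply]; linarith [h.2]
    rw [intervalIntegral.integral_neg] at this
    linarith
  linarith [hFTC ▸ hnonpos]
end

section
/- Fix g ∈ ℝ^d and a symmetric matrix H. The convex semidefinite program over nonnegative diagonal matrices P = diag(p): minimize Σᵢ (pᵢ + (1/η²) gᵢ²/pᵢ) subject to H ⪯ 2·diag(p) and p ≥ 0 has a unique minimizer. -/
open Matrix


lemma stmt18_quadform {d : ℕ} (p : Fin d → ℝ) (H : Matrix (Fin d) (Fin d) ℝ) (x : Fin d → ℝ) :
    x ⬝ᵥ (((2:ℝ) • diagonal p - H) *ᵥ x) = 2 * ∑ i, p i * x i^2 - x ⬝ᵥ (H *ᵥ x) := by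
  rw [Matrix.sub_mulVec, dotProduct_sub]
  congr 1
  rw [smul_mulVec, dotProduct_smul, smul_eq_mul]
  congr 1
  simp only [dotProduct, mulVec_diagonal]
  exact Finset.sum_congr rfl fun i _ => by ring

lemma stmt18_herm {d : ℕ} (p : Fin d → ℝ) (H : Matrix (Fin d) (Fin d) ℝ) (hH : H.IsSymm) :
    ((2:ℝ) • diagonal p - H).IsHermitian := by
  refine Matrix.IsHermitian.ext fun i j => ?_
  simp [Matrix.sub_apply, Matrix.diagonal_apply, hH.apply i j]
  by_cases h : i = j
  · simp [h]
  · simp [h]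
    exact fun hji => absurd hji.symm h

lemma stmt18_psd_iff {d : ℕ} (p : Fin d → ℝ) (H : Matrix (Fin d) (Fin d) ℝ) (hH : H.IsSymm) :
    ((2:ℝ) • diagonal p - H).PosSemidef ↔
      ∀ x : Fin d → ℝ, 0 ≤ 2 * ∑ i, p i * x i^2 - x ⬝ᵥ (H *ᵥ x) := by
  constructor
  · intro h x
    have h2 := h.dotProduct_mulVec_nonneg x
    rw [show star x = x from star_trivial x, stmt18_quadform] at h2
    exact h2
  · intro h
    refine PosSemidef.of_dotProduct_mulVec_nonneg (stmt18_herm p H hH) fun x => ?_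
    rw [show star x = x from star_trivial x, stmt18_quadform]
    exact h x

lemma stmt18_symmdot {d : ℕ} {C : Matrix (Fin d) (Fin d) ℝ} (hC : C.IsHermitian)
    (u v : Fin d → ℝ) : u ⬝ᵥ C *ᵥ v = v ⬝ᵥ C *ᵥ u := by
  rw [dotProduct_mulVec, ← mulVec_transpose, ← conjTranspose_eq_transpose_of_trivial, hC.eq,
    dotProduct_comm]

lemma stmt18_cs {d : ℕ} {C : Matrix (Fin d) (Fin d) ℝ} (hC : C.PosSemidef) (x y : Fin d → ℝ) :
    (x ⬝ᵥ C *ᵥ y)^2 ≤ (x ⬝ᵥ C *ᵥ x) * (y ⬝ᵥ C *ᵥ y) := by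
  have key : ∀ t : ℝ, 0 ≤ (y ⬝ᵥ C *ᵥ y) * (t * t) + (2 * (x ⬝ᵥ C *ᵥ y)) * t + (x ⬝ᵥ C *ᵥ x) := by
    intro t
    have h := hC.dotProduct_mulVec_nonneg (x + t • y)
    rw [show star (x + t • y) = x + t • y from star_trivial _] at h
    rw [mulVec_add, mulVec_smul, dotProduct_add, add_dotProduct, add_dotProduct,
      dotProduct_smul, smul_dotProduct, smul_dotProduct, dotProduct_smul] at h
    have hs := stmt18_symmdot hC.1 y x
    simp only [smul_eq_mul] at h
    rw [hs] at h
    linear_combination h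
  have hd := discrim_le_zero key
  rw [discrim] at hd
  nlinarith [hd]

lemma stmt18_exists_w {d : ℕ} {C : Matrix (Fin d) (Fin d) ℝ} (hC : C.PosSemidef) (i : Fin d)
    (hker : ∀ v : Fin d → ℝ, C *ᵥ v = 0 → v i = 0) :
    ∃ w : Fin d → ℝ, C *ᵥ w = Pi.single i 1 := by
  set T := Matrix.toEuclideanLin C with hT
  have hsym : T.IsSymmetric := Matrix.isHermitian_iff_isSymmetric.1 hC.1
  have hle : LinearMap.range T ≤ (LinearMap.ker T)ᗮ := by
    rintro _ ⟨w, rfl⟩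
    intro v hv
    rw [← hsym v w]
    rw [LinearMap.mem_ker.1 hv, inner_zero_left]
  have heq : LinearMap.range T = (LinearMap.ker T)ᗮ := by
    apply Submodule.eq_of_le_of_finrank_eq hle
    have h1 := LinearMap.finrank_range_add_finrank_ker T
    have h2 := Submodule.finrank_add_finrank_orthogonal (K := LinearMap.ker T)
    omega
  have he : EuclideanSpace.single i (1:ℝ) ∈ (LinearMap.ker T)ᗮ := by
    rw [Submodule.mem_orthogonal]
    intro v hv
    have hv0 : C *ᵥ ((WithLp.equiv 2 (Fin d → ℝ)) v) = 0 := by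
      have h3 : T v = 0 := LinearMap.mem_ker.1 hv
      have h4 := congrArg (WithLp.equiv 2 (Fin d → ℝ)) h3
      simpa [hT, Matrix.toEuclideanLin_apply] using h4
    have hvi := hker _ hv0
    rw [EuclideanSpace.inner_single_right]
    simp only [RCLike.star_def, _root_.map_one, one_mul]
    simpa using hvi
  rw [← heq] at he
  obtain ⟨w, hw⟩ := he
  refine ⟨(WithLp.equiv 2 (Fin d → ℝ)) w, ?_⟩
  have h5 := congrArg (WithLp.equiv 2 (Fin d → ℝ)) hw
  simpa [hT, Matrix.toEuclideanLin_apply] using h5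

lemma stmt18_eps {d : ℕ} {C : Matrix (Fin d) (Fin d) ℝ} (hC : C.PosSemidef) (i : Fin d)
    (hker : ∀ v : Fin d → ℝ, C *ᵥ v = 0 → v i = 0) :
    ∃ ε : ℝ, 0 < ε ∧ ∀ x : Fin d → ℝ, ε * (x i)^2 ≤ x ⬝ᵥ C *ᵥ x := by
  obtain ⟨w, hw⟩ := stmt18_exists_w hC i hker
  have ha0 : (0:ℝ) ≤ w ⬝ᵥ C *ᵥ w := by
    have := hC.dotProduct_mulVec_nonneg w
    rwa [show star w = w from star_trivial _] at this
  have hane : w ⬝ᵥ C *ᵥ w ≠ 0 := by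
    intro h0
    have h1 : C *ᵥ w = 0 :=
      (hC.dotProduct_mulVec_zero_iff w).1 (by rwa [show star w = w from star_trivial _])
    rw [h1] at hw
    have := congrFun hw i
    simp at this
  have ha : 0 < w ⬝ᵥ C *ᵥ w := lt_of_le_of_ne ha0 (Ne.symm hane)
  refine ⟨1 / (w ⬝ᵥ C *ᵥ w), by positivity, fun x => ?_⟩
  have hxi : x ⬝ᵥ C *ᵥ w = x i := by rw [hw, dotProduct_single, mul_one]
  have hcs := stmt18_cs hC x w
  rw [hxi] at hcs
  have hxx : 0 ≤ x ⬝ᵥ C *ᵥ x := by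
    have := hC.dotProduct_mulVec_nonneg x
    rwa [show star x = x from star_trivial _] at this
  rw [div_mul_eq_mul_div, div_le_iff₀ ha]
  nlinarith [hcs]

lemma stmt18_convkey (G a b : ℝ) (ha : 0 < a) (hb : 0 < b) :
    (G^2/a + G^2/b)/2 - G^2/((a+b)/2) = G^2*(a-b)^2/(2*(a*b*(a+b))) := by
  field_simp
  ring

lemma stmt18_conv_le {c : ℝ} (hc : 0 < c) (G a b : ℝ) (ha : 0 ≤ a) (hb : 0 ≤ b)
    (hG : G ≠ 0 → 0 < a ∧ 0 < b) :
    (a+b)/2 + c*(G^2/((a+b)/2)) ≤ ((a + c*(G^2/a)) + (b + c*(G^2/b)))/2 := by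
  by_cases hG0 : G = 0
  · simp [hG0]
  · obtain ⟨hA, hB⟩ := hG hG0
    have hkey := stmt18_convkey G a b hA hB
    have hpos : 0 ≤ G^2*(a-b)^2/(2*(a*b*(a+b))) := by positivity
    have h2 : G^2/((a+b)/2) ≤ (G^2/a + G^2/b)/2 := by linarith
    have hid : ((a + c*(G^2/a)) + (b + c*(G^2/b)))/2 - ((a+b)/2 + c*(G^2/((a+b)/2)))
        = c*((G^2/a + G^2/b)/2 - G^2/((a+b)/2)) := by ring
    nlinarith [mul_nonneg hc.le (sub_nonneg.2 h2)]

lemma stmt18_conv_lt {c : ℝ} (hc : 0 < c) (G a b : ℝ) (hG0 : G ≠ 0)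
    (hA : 0 < a) (hB : 0 < b) (hab : a ≠ b) :
    (a+b)/2 + c*(G^2/((a+b)/2)) < ((a + c*(G^2/a)) + (b + c*(G^2/b)))/2 := by
  have hkey := stmt18_convkey G a b hA hB
  have hG2 : 0 < G^2 := pow_pos (abs_pos.2 hG0) 2 |>.trans_eq (by rw [sq_abs])
  have hab2 : 0 < (a-b)^2 := pow_pos (abs_pos.2 (sub_ne_zero.2 hab)) 2 |>.trans_eq (by rw [sq_abs])
  have hpos : 0 < G^2*(a-b)^2/(2*(a*b*(a+b))) := by positivity
  have h2 : G^2/((a+b)/2) < (G^2/a + G^2/b)/2 := by linarith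
  have hid : ((a + c*(G^2/a)) + (b + c*(G^2/b)))/2 - ((a+b)/2 + c*(G^2/((a+b)/2)))
      = c*((G^2/a + G^2/b)/2 - G^2/((a+b)/2)) := by ring
  nlinarith [mul_pos hc (sub_pos.2 h2)]

lemma stmt18_psd_const {d : ℕ} (H : Matrix (Fin d) (Fin d) ℝ) (hH : H.IsSymm) :
    ((2:ℝ) • diagonal (fun _ : Fin d => (∑ i, ∑ j, |H i j|) + 1) - H).PosSemidef := by
  rw [stmt18_psd_iff _ _ hH]
  intro x
  set S := ∑ k, x k^2 with hS
  have hS0 : 0 ≤ S := Finset.sum_nonneg fun k _ => sq_nonneg _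
  have hxH : x ⬝ᵥ (H *ᵥ x) = ∑ i, ∑ j, x i * (H i j * x j) := by
    simp [dotProduct, mulVec, Finset.mul_sum]
  have hbound : x ⬝ᵥ (H *ᵥ x) ≤ (∑ i, ∑ j, |H i j|) * S := by
    rw [hxH, Finset.sum_mul]
    refine Finset.sum_le_sum fun i _ => ?_
    rw [Finset.sum_mul]
    refine Finset.sum_le_sum fun j _ => ?_
    have h1 : x i ^2 ≤ S := Finset.single_le_sum (fun k _ => sq_nonneg (x k)) (Finset.mem_univ i)
    have h2 : x j ^2 ≤ S := Finset.single_le_sum (fun k _ => sq_nonneg (x k)) (Finset.mem_univ j)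
    calc x i * (H i j * x j) = H i j * (x i * x j) := by ring
      _ ≤ |H i j * (x i * x j)| := le_abs_self _
      _ = |H i j| * |x i * x j| := abs_mul _ _
      _ ≤ |H i j| * S := by
          refine mul_le_mul_of_nonneg_left ?_ (abs_nonneg _)
          rw [abs_mul]
          nlinarith [sq_abs (x i), sq_abs (x j), sq_nonneg (|x i| - |x j|), abs_nonneg (x i), abs_nonneg (x j)]
  have hsum : ∑ i, (fun _ : Fin d => (∑ i, ∑ j, |H i j|) + 1) i * x i^2
      = ((∑ i, ∑ j, |H i j|) + 1) * S := by
    rw [hS, Finset.mul_sum]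
  have hT0 : 0 ≤ ∑ i, ∑ j, |H i j| :=
    Finset.sum_nonneg fun i _ => Finset.sum_nonneg fun j _ => abs_nonneg _
  rw [hsum]
  nlinarith [hbound, hT0, hS0]


def stmt18_Feas {d : ℕ} (g : Fin d → ℝ) (H : Matrix (Fin d) (Fin d) ℝ) (p : Fin d → ℝ) : Prop :=
  (∀ i, 0 ≤ p i) ∧ (∀ i, g i ≠ 0 → 0 < p i) ∧ ((2:ℝ) • Matrix.diagonal p - H).PosSemidef

noncomputable def stmt18_f {d : ℕ} (g : Fin d → ℝ) (c : ℝ) (p : Fin d → ℝ) : ℝ :=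
  ∑ i, (p i + c * (g i ^ 2 / p i))

lemma stmt18_exists {d : ℕ} (g : Fin d → ℝ) (H : Matrix (Fin d) (Fin d) ℝ) (hH : H.IsSymm)
    (c : ℝ) (hc : 0 < c) :
    ∃ p, stmt18_Feas g H p ∧ ∀ q, stmt18_Feas g H q → stmt18_f g c p ≤ stmt18_f g c q := by
  classical
  set M : ℝ := (∑ i, ∑ j, |H i j|) + 1 with hM
  have hM0 : 0 < M := by
    have h0 : 0 ≤ ∑ i, ∑ j, |H i j| :=
      Finset.sum_nonneg fun i _ => Finset.sum_nonneg fun j _ => abs_nonneg _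
    rw [hM]; linarith
  set p₀ : Fin d → ℝ := fun _ => M with hp₀
  have hp₀feas : stmt18_Feas g H p₀ := ⟨fun i => hM0.le, fun i _ => hM0, stmt18_psd_const H hH⟩
  set B : ℝ := stmt18_f g c p₀ with hB
  have hterm_nonneg : ∀ (q : Fin d → ℝ), (∀ i, 0 ≤ q i) → ∀ i, 0 ≤ q i + c * (g i^2 / q i) :=
    fun q hq i => add_nonneg (hq i) (mul_nonneg hc.le (div_nonneg (sq_nonneg _) (hq i)))
  have hterm_le : ∀ (q : Fin d → ℝ), (∀ i, 0 ≤ q i) → ∀ i,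
      q i + c * (g i^2 / q i) ≤ stmt18_f g c q :=
    fun q hq i => Finset.single_le_sum (fun j _ => hterm_nonneg q hq j) (Finset.mem_univ i)
  have hBM : ∀ _ : Fin d, M ≤ B := by
    intro i
    have h1 := hterm_le p₀ (fun _ => hM0.le) i
    have h2 : 0 ≤ c * (g i^2 / p₀ i) := mul_nonneg hc.le (div_nonneg (sq_nonneg _) hM0.le)
    simp only [hp₀] at h1 h2
    linarith
  have hB0 : ∀ _ : Fin d, 0 < B := fun i => lt_of_lt_of_le hM0 (hBM i)
  set lb : Fin d → ℝ := fun i => c * g i^2 / B with hlb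
  have hlb_nonneg : ∀ i, 0 ≤ lb i := fun i =>
    div_nonneg (mul_nonneg hc.le (sq_nonneg _)) (hB0 i).le
  have hlb_pos : ∀ i, g i ≠ 0 → 0 < lb i := by
    intro i hgi
    have hg2 : 0 < g i ^ 2 := by positivity
    exact div_pos (mul_pos hc hg2) (hB0 i)
  set K : Set (Fin d → ℝ) :=
    {p | (∀ i, lb i ≤ p i ∧ p i ≤ B) ∧ ((2:ℝ) • diagonal p - H).PosSemidef} with hK
  have hKcompact : IsCompact K := by
    have h1 : K = (Set.univ.pi fun i => Set.Icc (lb i) B) ∩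
        {p : Fin d → ℝ | ∀ x, 0 ≤ 2 * ∑ i, p i * x i^2 - x ⬝ᵥ (H *ᵥ x)} := by
      ext p
      simp only [hK, Set.mem_inter_iff, Set.mem_pi, Set.mem_univ, Set.mem_Icc,
        forall_true_left, Set.mem_setOf_eq, stmt18_psd_iff p H hH]
    rw [h1]
    refine (isCompact_univ_pi fun i => isCompact_Icc).inter_right ?_
    rw [Set.setOf_forall]
    refine isClosed_iInter fun x => isClosed_le continuous_const ?_
    exact (continuous_const.mul (continuous_finset_sum _ fun i _ =>
      (continuous_apply i).mul continuous_const)).sub continuous_const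
  have hp₀K : p₀ ∈ K := by
    refine ⟨fun i => ⟨?_, ?_⟩, hp₀feas.2.2⟩
    · by_cases hgi : g i = 0
      · show lb i ≤ p₀ i
        rw [hlb, hp₀]
        simp [hgi]
        exact hM0.le
      · have h1 := hterm_le p₀ (fun _ => hM0.le) i
        simp only [hp₀] at h1
        have h2 : c * g i^2 / M ≤ B := by
          rw [← mul_div_assoc] at h1
          have h3 : 0 ≤ c * g i ^2 / M := div_nonneg (mul_nonneg hc.le (sq_nonneg _)) hM0.le
          rw [mul_div_assoc] at h1
          rw [mul_div_assoc]
          linarith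
        show lb i ≤ p₀ i
        rw [hlb, hp₀]
        simp only
        rw [div_le_iff₀ (hB0 i)]
        have h4 := (div_le_iff₀ hM0).1 h2
        linarith
    · show p₀ i ≤ B
      rw [hp₀]
      exact hBM i
  have hcont : ContinuousOn (stmt18_f g c) K := by
    have hfd : stmt18_f g c = fun p : Fin d → ℝ => ∑ i, (p i + c * (g i ^ 2 / p i)) := rfl
    rw [hfd]
    refine continuousOn_finset_sum _ fun i _ => ?_
    by_cases hgi : g i = 0
    · have heq : (fun p : Fin d → ℝ => p i + c * (g i^2 / p i)) = fun p => p i + c * 0 := by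
        funext p; rw [hgi]; simp
      rw [heq]
      exact ((continuous_apply i).add continuous_const).continuousOn
    · refine (continuous_apply i).continuousOn.add
        (continuousOn_const.mul (ContinuousOn.div continuousOn_const
          (continuous_apply i).continuousOn ?_))
      intro p hp
      exact ne_of_gt (lt_of_lt_of_le (hlb_pos i hgi) (hp.1 i).1)
  obtain ⟨p, hpK, hpmin'⟩ := hKcompact.exists_isMinOn ⟨p₀, hp₀K⟩ hcont
  have hpmin : ∀ q ∈ K, stmt18_f g c p ≤ stmt18_f g c q := fun q hq => hpmin' hq
  have hpfeas : stmt18_Feas g H p := ⟨fun i => le_trans (hlb_nonneg i) (hpK.1 i).1,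
    fun i hgi => lt_of_lt_of_le (hlb_pos i hgi) (hpK.1 i).1, hpK.2⟩
  refine ⟨p, hpfeas, fun q hq => ?_⟩
  by_cases hqB : stmt18_f g c q ≤ B
  · refine hpmin q ⟨fun i => ⟨?_, ?_⟩, hq.2.2⟩
    · by_cases hgi : g i = 0
      · show lb i ≤ q i
        rw [hlb]
        simp [hgi]
        exact hq.1 i
      · have hqpos := hq.2.1 i hgi
        have h1 := hterm_le q hq.1 i
        have h2 : c * (g i^2 / q i) ≤ B := by
          have := hq.1 i
          linarith
        show lb i ≤ q i
        rw [hlb]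
        simp only
        rw [div_le_iff₀ (hB0 i)]
        have h3 : c * g i^2 / q i ≤ B := by rw [mul_div_assoc]; exact h2
        have h4 := (div_le_iff₀ hqpos).1 h3
        linarith
    · have h1 := hterm_le q hq.1 i
      have h2 : 0 ≤ c * (g i^2 / q i) := mul_nonneg hc.le (div_nonneg (sq_nonneg _) (hq.1 i))
      linarith
  · have h5 := hpmin p₀ hp₀K
    have h6 := not_le.1 hqB
    rw [← hB] at h5
    linarith

lemma stmt18_uniq {d : ℕ} (g : Fin d → ℝ) (H : Matrix (Fin d) (Fin d) ℝ) (hH : H.IsSymm)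
    (c : ℝ) (hc : 0 < c) {p y : Fin d → ℝ}
    (hp : stmt18_Feas g H p) (hpmin : ∀ q, stmt18_Feas g H q → stmt18_f g c p ≤ stmt18_f g c q)
    (hy : stmt18_Feas g H y) (hymin : ∀ q, stmt18_Feas g H q → stmt18_f g c y ≤ stmt18_f g c q) :
    y = p := by
  classical
  obtain ⟨hp0, hppos, hpPSD⟩ := hp
  obtain ⟨hy0, hypos, hyPSD⟩ := hy
  have hfeq : stmt18_f g c p = stmt18_f g c y :=
    le_antisymm (hpmin y ⟨hy0, hypos, hyPSD⟩) (hymin p ⟨hp0, hppos, hpPSD⟩)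
  set m : Fin d → ℝ := fun i => (p i + y i)/2 with hm
  have hm0 : ∀ i, 0 ≤ m i := by
    intro i; show 0 ≤ (p i + y i)/2; linarith [hp0 i, hy0 i]
  have hmpos : ∀ i, g i ≠ 0 → 0 < m i := by
    intro i hgi; show 0 < (p i + y i)/2; linarith [hppos i hgi, hypos i hgi]
  have hpQ := (stmt18_psd_iff p H hH).1 hpPSD
  have hyQ := (stmt18_psd_iff y H hH).1 hyPSD
  have hsumm : ∀ x : Fin d → ℝ, ∑ i, m i * x i^2 = (∑ i, p i * x i^2 + ∑ i, y i * x i^2)/2 := by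
    intro x
    rw [← Finset.sum_add_distrib, Finset.sum_div]
    refine Finset.sum_congr rfl fun i _ => ?_
    show (p i + y i)/2 * x i^2 = _
    ring
  have hmPSD : ((2:ℝ) • diagonal m - H).PosSemidef := by
    rw [stmt18_psd_iff m H hH]
    intro x
    have h1 := hpQ x
    have h2 := hyQ x
    rw [hsumm x]
    linarith
  have hmfeas : stmt18_Feas g H m := ⟨hm0, hmpos, hmPSD⟩
  have hsplit : ∑ i, ((p i + c*(g i^2/p i)) + (y i + c*(g i^2/y i)))
      = stmt18_f g c p + stmt18_f g c y := by
    rw [Finset.sum_add_distrib]; rfl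
  have hconv : ∀ i, m i + c*(g i^2/m i)
      ≤ ((p i + c*(g i^2/p i)) + (y i + c*(g i^2/y i)))/2 := by
    intro i
    exact stmt18_conv_le hc (g i) (p i) (y i) (hp0 i) (hy0 i)
      (fun hgi => ⟨hppos i hgi, hypos i hgi⟩)
  have hfm_half : stmt18_f g c m ≤ (stmt18_f g c p + stmt18_f g c y)/2 := by
    calc stmt18_f g c m = ∑ i, (m i + c*(g i^2/m i)) := rfl
      _ ≤ ∑ i, ((p i + c*(g i^2/p i)) + (y i + c*(g i^2/y i)))/2 :=
          Finset.sum_le_sum fun i _ => hconv i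
      _ = (stmt18_f g c p + stmt18_f g c y)/2 := by
          rw [← Finset.sum_div, hsplit]
  have hfm_le : stmt18_f g c m ≤ stmt18_f g c p := by rw [← hfeq] at hfm_half; linarith
  have hfp_le : stmt18_f g c p ≤ stmt18_f g c m := hpmin m hmfeas
  have hsupp : ∀ i, g i ≠ 0 → p i = y i := by
    intro i hgi
    by_contra hne
    have hstrict := stmt18_conv_lt hc (g i) (p i) (y i) hgi (hppos i hgi) (hypos i hgi) hne
    have h1 : stmt18_f g c m < (stmt18_f g c p + stmt18_f g c y)/2 := by
      calc stmt18_f g c m = ∑ i, (m i + c*(g i^2/m i)) := rfl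
        _ < ∑ i, ((p i + c*(g i^2/p i)) + (y i + c*(g i^2/y i)))/2 :=
            Finset.sum_lt_sum (fun j _ => hconv j) ⟨i, Finset.mem_univ i, hstrict⟩
        _ = (stmt18_f g c p + stmt18_f g c y)/2 := by
            rw [← Finset.sum_div, hsplit]
    rw [← hfeq] at h1
    linarith
  by_contra hne
  obtain ⟨i, hnei⟩ := Function.ne_iff.1 hne
  have hgi : g i = 0 := by
    by_contra hgi
    exact hnei ((hsupp i hgi).symm)
  have hmipos : 0 < m i := by
    show 0 < (p i + y i)/2
    rcases eq_or_lt_of_le (hp0 i) with h | h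
    · rcases eq_or_lt_of_le (hy0 i) with h' | h'
      · exact absurd (h'.symm.trans h) hnei
      · linarith
    · linarith [hy0 i]
  set C : Matrix (Fin d) (Fin d) ℝ := (2:ℝ) • diagonal m - H with hC
  have hCpsd : C.PosSemidef := hmPSD
  have hker : ∀ v : Fin d → ℝ, C *ᵥ v = 0 → v i = 0 := by
    intro v hv
    have hQm : 2 * ∑ j, m j * v j^2 - v ⬝ᵥ (H *ᵥ v) = 0 := by
      rw [← stmt18_quadform m H v, ← hC, hv, dotProduct_zero]
    have h1 := hpQ v
    have h2 := hyQ v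
    rw [hsumm v] at hQm
    have hqp0 : 2 * ∑ j, p j * v j^2 - v ⬝ᵥ (H *ᵥ v) = 0 := by linarith
    have hqy0 : 2 * ∑ j, y j * v j^2 - v ⬝ᵥ (H *ᵥ v) = 0 := by linarith
    have hpv : ((2:ℝ) • diagonal p - H) *ᵥ v = 0 := by
      refine (hpPSD.dotProduct_mulVec_zero_iff v).1 ?_
      rw [show star v = v from star_trivial _, stmt18_quadform]
      exact hqp0
    have hyv : ((2:ℝ) • diagonal y - H) *ᵥ v = 0 := by
      refine (hyPSD.dotProduct_mulVec_zero_iff v).1 ?_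
      rw [show star v = v from star_trivial _, stmt18_quadform]
      exact hqy0
    have c1 : ∀ (w : Fin d → ℝ), (((2:ℝ) • diagonal w - H) *ᵥ v) i
        = 2 * (w i * v i) - (H *ᵥ v) i := by
      intro w
      rw [Matrix.sub_mulVec, smul_mulVec]
      simp [mulVec_diagonal]
    have e1 := congrFun hpv i
    have e2 := congrFun hyv i
    rw [c1 p] at e1
    rw [c1 y] at e2
    simp only [Pi.zero_apply] at e1 e2
    have h3 : (p i - y i) * v i = 0 := by linear_combination (e1 - e2)/2
    exact (mul_eq_zero.1 h3).resolve_left (sub_ne_zero.2 (Ne.symm hnei))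
  obtain ⟨ε, hε, heps⟩ := stmt18_eps hCpsd i hker
  set δ : ℝ := min (ε/2) (m i/2) with hδdef
  have hδ : 0 < δ := lt_min (by linarith) (by linarith)
  have hδε : 2*δ ≤ ε := by
    have := min_le_left (ε/2) (m i/2); linarith
  have hδm : δ ≤ m i/2 := min_le_right _ _
  set r : Fin d → ℝ := fun j => if j = i then m i - δ else m j with hr
  have hri : r i = m i - δ := by rw [hr]; simp
  have hrj : ∀ j, j ≠ i → r j = m j := by intro j hj; rw [hr]; simp [hj]
  have hr0 : ∀ j, 0 ≤ r j := by
    intro j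
    by_cases hj : j = i
    · rw [hj, hri]; linarith
    · rw [hrj j hj]; exact hm0 j
  have hrpos : ∀ j, g j ≠ 0 → 0 < r j := by
    intro j hgj
    by_cases hj : j = i
    · rw [hj] at hgj; exact absurd hgi hgj
    · rw [hrj j hj]; exact hmpos j hgj
  have hsumr : ∀ x : Fin d → ℝ, ∑ j, r j * x j^2 = ∑ j, m j * x j^2 - δ * x i^2 := by
    intro x
    have hterm : ∀ j, r j * x j^2 = m j * x j^2 - (if j = i then δ * x j^2 else 0) := by
      intro j
      by_cases hj : j = i
      · rw [hj, hri]; simp; ring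
      · rw [hrj j hj]; simp [hj]
    rw [Finset.sum_congr rfl (fun j _ => hterm j), Finset.sum_sub_distrib,
      Finset.sum_ite_eq' Finset.univ i (fun j => δ * x j^2)]
    simp
  have hrPSD : ((2:ℝ) • diagonal r - H).PosSemidef := by
    rw [stmt18_psd_iff r H hH]
    intro x
    have h1 := heps x
    have h2 : x ⬝ᵥ C *ᵥ x = 2 * ∑ j, m j * x j^2 - x ⬝ᵥ (H *ᵥ x) := by
      rw [hC, stmt18_quadform]
    rw [h2] at h1
    rw [hsumr x]
    nlinarith [sq_nonneg (x i)]
  have hfr : stmt18_f g c r = stmt18_f g c m - δ := by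
    have hterm : ∀ j, r j + c*(g j^2/r j)
        = (m j + c*(g j^2/m j)) - (if j = i then δ else 0) := by
      intro j
      by_cases hj : j = i
      · rw [hj, hri]
        simp [hgi]
      · rw [hrj j hj]; simp [hj]
    calc stmt18_f g c r = ∑ j, ((m j + c*(g j^2/m j)) - (if j = i then δ else 0)) :=
          Finset.sum_congr rfl fun j _ => hterm j
      _ = stmt18_f g c m - δ := by
          rw [Finset.sum_sub_distrib, Finset.sum_ite_eq' Finset.univ i (fun _ => δ)]
          simp [stmt18_f]
  have hfinal := hpmin r ⟨hr0, hrpos, hrPSD⟩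
  rw [hfr] at hfinal
  linarith


/-- The convex program over nonnegative diagonal preconditioners `P = diag(p)`:
minimize `∑ᵢ (pᵢ + (1/η²) gᵢ²/pᵢ)` subject to `H ⪯ 2 diag(p)` and `p ≥ 0`, has a unique
minimizer.  Points with `gᵢ ≠ 0` and `pᵢ = 0` have objective value `+∞` and are excluded
from the feasible set; when `gᵢ = 0` and `pᵢ = 0` the term `gᵢ²/pᵢ` is interpreted as `0`
(which agrees with Lean's convention `0/0 = 0`). -/
theorem stmt18 {d : ℕ} (g : Fin d → ℝ) (H : Matrix (Fin d) (Fin d) ℝ) (hH : H.IsSymm)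
    (η : ℝ) (hη : 0 < η) :
    ∃! p : Fin d → ℝ,
      ((∀ i, 0 ≤ p i) ∧ (∀ i, g i ≠ 0 → 0 < p i) ∧
        ((2 : ℝ) • Matrix.diagonal p - H).PosSemidef) ∧
      ∀ q : Fin d → ℝ, (∀ i, 0 ≤ q i) → (∀ i, g i ≠ 0 → 0 < q i) →
        ((2 : ℝ) • Matrix.diagonal q - H).PosSemidef →
        (∑ i, (p i + 1 / η ^ 2 * (g i ^ 2 / p i))) ≤
          ∑ i, (q i + 1 / η ^ 2 * (g i ^ 2 / q i)) := by
  have hc : (0:ℝ) < 1 / η ^ 2 := by positivity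
  obtain ⟨p, hfeas, hmin⟩ := stmt18_exists g H hH (1/η^2) hc
  refine ⟨p, ⟨hfeas, fun q h1 h2 h3 => hmin q ⟨h1, h2, h3⟩⟩, ?_⟩
  rintro y ⟨hyfeas, hymin⟩
  exact stmt18_uniq g H hH (1/η^2) hc hfeas hmin hyfeas
    (fun q hq => hymin q hq.1 hq.2.1 hq.2.2)
end
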